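/- For every g in the closed unit ball of ℋ^∞(B_{ℓ₂},ℓ₂), the composition operator C_g : f ↦ f̃ ∘ g is a nonzero continuous ℂ-algebra homomorphism from 𝒜_u(B_{ℓ₂}) to ℋ^∞(B_{ℓ₂}) (i.e. C_g ∈ ℳ_{u,∞}(B_{ℓ₂},B_{ℓ₂})) and ξ(C_g) = g. Consequently, the image of the projection ξ is exactly the closed unit ball of ℋ^∞(B_{ℓ₂},ℓ₂). -/

import Mathlib

open Metric Set Filter

noncomputable section

/-- `ℓ2` is the complex Hilbert space of square-summable sequences indexed by `ℕ`. -/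
abbrev ℓ2 : Type := lp (fun _ : ℕ => ℂ) 2

/-- The open unit ball of `ℓ2`. -/
def oB : Set ℓ2 := Metric.ball 0 1

/-- The closed unit ball of `ℓ2`. -/
def cB : Set ℓ2 := Metric.closedBall 0 1

/-- The unit sphere of `ℓ2`. -/
def sph : Set ℓ2 := Metric.sphere 0 1

/-- The coordinate functional `x ↦ ⟨x, eₙ⟩ = xₙ` (inner product linear in the first variable). -/
def coord (n : ℕ) : ℓ2 → ℂ := fun x => x n

/-- Supremum norm on the open unit ball, for scalar-valued functions. -/
def supNorm (f : ℓ2 → ℂ) : ℝ := ⨆ x : oB, ‖f (x : ℓ2)‖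

/-- Supremum norm on the open unit ball, for `ℓ2`-valued functions. -/
def supNormV (g : ℓ2 → ℓ2) : ℝ := ⨆ x : oB, ‖g (x : ℓ2)‖

/-- Membership in `𝒜ᵤ(B)`: holomorphic on the open unit ball and uniformly continuous there. -/
def MemAu (f : ℓ2 → ℂ) : Prop :=
  DifferentiableOn ℂ f oB ∧ UniformContinuousOn f oB

/-- Membership in `ℋ^∞(B)`: holomorphic and bounded on the open unit ball. -/
def MemHinf (f : ℓ2 → ℂ) : Prop :=
  DifferentiableOn ℂ f oB ∧ ∃ C, ∀ x ∈ oB, ‖f x‖ ≤ C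

/-- Membership in `ℋ^∞(B,ℓ2)`: holomorphic and bounded on the open unit ball, `ℓ2`-valued. -/
def MemHinfV (g : ℓ2 → ℓ2) : Prop :=
  DifferentiableOn ℂ g oB ∧ ∃ C, ∀ x ∈ oB, ‖g x‖ ≤ C

/-- `fext` is (a representative of) the unique continuous extension `f̃` of `f` to the
closed unit ball. -/
def IsExt (f fext : ℓ2 → ℂ) : Prop :=
  ContinuousOn fext cB ∧ Set.EqOn fext f oB

/-- An element of the scalar-valued spectrum `ℳᵤ(B)`: a nonzero continuous `ℂ`-algebra
homomorphism `𝒜ᵤ(B) → ℂ`, encoded as a map on representatives. -/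
structure MuHom where
  toFun : (ℓ2 → ℂ) → ℂ
  map_add : ∀ f g, MemAu f → MemAu g → toFun (f + g) = toFun f + toFun g
  map_mul : ∀ f g, MemAu f → MemAu g → toFun (f * g) = toFun f * toFun g
  map_smul : ∀ (c : ℂ) (f), MemAu f → toFun (c • f) = c * toFun f
  respects : ∀ f g, MemAu f → MemAu g → Set.EqOn f g oB → toFun f = toFun g
  nonzero : ∃ f, MemAu f ∧ toFun f ≠ 0
  cont : ∃ C, ∀ f, MemAu f → ‖toFun f‖ ≤ C * supNorm f

/-- An element of the vector-valued spectrum `ℳ_{u,∞}(B,B)`: a nonzero continuous `ℂ`-algebra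
homomorphism `𝒜ᵤ(B) → ℋ^∞(B)`, encoded as a map on representatives. -/
structure MuInfHom where
  toFun : (ℓ2 → ℂ) → (ℓ2 → ℂ)
  maps_mem : ∀ f, MemAu f → MemHinf (toFun f)
  map_add : ∀ f g, MemAu f → MemAu g → ∀ x ∈ oB, toFun (f + g) x = toFun f x + toFun g x
  map_mul : ∀ f g, MemAu f → MemAu g → ∀ x ∈ oB, toFun (f * g) x = toFun f x * toFun g x
  map_smul : ∀ (c : ℂ) (f), MemAu f → ∀ x ∈ oB, toFun (c • f) x = c * toFun f x
  respects : ∀ f g, MemAu f → MemAu g → Set.EqOn f g oB → Set.EqOn (toFun f) (toFun g) oB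
  nonzero : ∃ f, MemAu f ∧ ∃ x ∈ oB, toFun f x ≠ 0
  cont : ∃ C, ∀ f, MemAu f → ∀ x ∈ oB, ‖toFun f x‖ ≤ C * supNorm f

/-- An element of the scalar-valued spectrum `ℳ_∞(B)`: a nonzero continuous `ℂ`-algebra
homomorphism `ℋ^∞(B) → ℂ`, encoded as a map on representatives. -/
structure MInfHom where
  toFun : (ℓ2 → ℂ) → ℂ
  map_add : ∀ f g, MemHinf f → MemHinf g → toFun (f + g) = toFun f + toFun g
  map_mul : ∀ f g, MemHinf f → MemHinf g → toFun (f * g) = toFun f * toFun g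
  map_smul : ∀ (c : ℂ) (f), MemHinf f → toFun (c • f) = c * toFun f
  respects : ∀ f g, MemHinf f → MemHinf g → Set.EqOn f g oB → toFun f = toFun g
  nonzero : ∃ f, MemHinf f ∧ toFun f ≠ 0
  cont : ∃ C, ∀ f, MemHinf f → ‖toFun f‖ ≤ C * supNorm f

/-- `ξ(Φ) = g`: the projection of `Φ` is the function `g`, i.e. `Φ(⟨·,eₙ⟩)(x) = g(x)ₙ`. -/
def xiEq (Φ : MuInfHom) (g : ℓ2 → ℓ2) : Prop :=
  ∀ x ∈ oB, ∀ n : ℕ, Φ.toFun (coord n) x = g x n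

/-- `Φ = C_g`: `Φ` is the composition homomorphism `f ↦ f̃ ∘ g`. -/
def IsCompHom (Φ : MuInfHom) (g : ℓ2 → ℓ2) : Prop :=
  ∀ f fext, MemAu f → IsExt f fext → ∀ x ∈ oB, Φ.toFun f x = fext (g x)

/-- The open unit ball of `ℋ^∞(B,ℓ2)`. -/
def ballHV : Set (ℓ2 → ℓ2) := {h | MemHinfV h ∧ supNormV h < 1}

/-- The open unit ball of `ℋ^∞(B)`. -/
def ballH : Set (ℓ2 → ℂ) := {h | MemHinf h ∧ supNorm h < 1}

/-- `F` is holomorphic on the open unit ball of `ℋ^∞(B,ℓ2)`: it is locally bounded there and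
`ℂ`-differentiable along every complex line (which, for maps on a ball of a Banach space, is
equivalent to Fréchet holomorphy). -/
def HolomorphicOnBallHV (F : (ℓ2 → ℓ2) → ℂ) : Prop :=
  (∀ h ∈ ballHV, ∃ ε > 0, ∃ C, ∀ k ∈ ballHV, supNormV (k - h) < ε → ‖F k‖ ≤ C) ∧
  (∀ h ∈ ballHV, ∀ k, MemHinfV k →
    DifferentiableOn ℂ (fun z : ℂ => F (h + z • k)) {z : ℂ | (h + z • k) ∈ ballHV})

/-- `F` is holomorphic on the open unit ball of `ℋ^∞(B)`: it is locally bounded there and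
`ℂ`-differentiable along every complex line. -/
def HolomorphicOnBallH (F : (ℓ2 → ℂ) → ℂ) : Prop :=
  (∀ h ∈ ballH, ∃ ε > 0, ∃ C, ∀ k ∈ ballH, supNorm (k - h) < ε → ‖F k‖ ≤ C) ∧
  (∀ h ∈ ballH, ∀ k, MemHinf k →
    DifferentiableOn ℂ (fun z : ℂ => F (h + z • k)) {z : ℂ | (h + z • k) ∈ ballH})

/-- `h ∈ 𝒞ℓ(f,g)` (with `fext = f̃` the continuous extension of `f` to the closed ball):
there is a net `(g_α)` in the open unit ball of `ℋ^∞(B,ℓ2)` converging weak-star to `g`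
(pointwise weak convergence of values) with `f̃(g_α(y)) → h(y)` for every `y ∈ B`. -/
def InCluster (fext : ℓ2 → ℂ) (g : ℓ2 → ℓ2) (h : ℓ2 → ℂ) : Prop :=
  ∃ (ι : Type) (l : Filter ι), l.NeBot ∧ ∃ gA : ι → ℓ2 → ℓ2,
    (∀ i, gA i ∈ ballHV) ∧
    (∀ y ∈ oB, ∀ u : ℓ2,
      Filter.Tendsto (fun i => (inner ℂ (gA i y) u : ℂ)) l (nhds (inner ℂ (g y) u))) ∧
    (∀ y ∈ oB, Filter.Tendsto (fun i => fext (gA i y)) l (nhds (h y)))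


/-! ### Auxiliary basics -/

lemma oB_open : IsOpen oB := isOpen_ball

lemma mem_oB {x : ℓ2} : x ∈ oB ↔ ‖x‖ < 1 := by
  simp [oB, mem_ball, dist_zero_right]

lemma mem_cB {x : ℓ2} : x ∈ cB ↔ ‖x‖ ≤ 1 := by
  simp [cB, mem_closedBall, dist_zero_right]

lemma zero_mem_oB : (0 : ℓ2) ∈ oB := by simp [mem_oB]

lemma oB_subset_cB : oB ⊆ cB := ball_subset_closedBall

instance : Nonempty ↥oB := ⟨⟨0, zero_mem_oB⟩⟩

/-- A uniformly continuous function on the ball is bounded. -/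
lemma MemAu.bounded {f : ℓ2 → ℂ} (hf : MemAu f) : ∃ C, ∀ x ∈ oB, ‖f x‖ ≤ C := by
  obtain ⟨δ, hδ, hfd⟩ := (Metric.uniformContinuousOn_iff.1 hf.2) 1 one_pos
  obtain ⟨m, hm⟩ := exists_nat_one_div_lt hδ
  refine ⟨‖f 0‖ + (m + 1), fun x hx => ?_⟩
  have hxl : ‖x‖ < 1 := mem_oB.1 hx
  have hsm : ∀ k : ℕ, k ≤ m + 1 → ((k : ℝ)/(m+1)) • x ∈ oB := by
    intro k hk
    rw [mem_oB, norm_smul]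
    have h0 : (0:ℝ) ≤ (k : ℝ)/(m+1) := by positivity
    have h1 : (k : ℝ)/(m+1) ≤ 1 := by
      rw [div_le_one (by positivity)]
      exact_mod_cast hk
    calc ‖((k : ℝ)/(m+1))‖ * ‖x‖ ≤ 1 * ‖x‖ := by
          apply mul_le_mul_of_nonneg_right _ (norm_nonneg _)
          rw [Real.norm_eq_abs, abs_of_nonneg h0]; exact h1
      _ < 1 := by rwa [one_mul]
  have key : ∀ k : ℕ, k ≤ m + 1 → ‖f (((k : ℝ)/(m+1)) • x)‖ ≤ ‖f 0‖ + k := by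
    intro k
    induction k with
    | zero => intro _; simp
    | succ j ih =>
      intro hj
      have hj' : j ≤ m + 1 := le_trans (Nat.le_succ j) hj
      have hmem1 := hsm j hj'
      have hmem2 := hsm (j+1) hj
      have hdist : dist ((((j+1 : ℕ) : ℝ)/(m+1)) • x) ((((j : ℕ) : ℝ)/(m+1)) • x) < δ := by
        rw [dist_eq_norm, ← sub_smul]
        have : ((j+1 : ℕ) : ℝ)/(m+1) - ((j : ℕ) : ℝ)/(m+1) = 1/(m+1) := by
          push_cast; ring
        rw [this, norm_smul, Real.norm_eq_abs, abs_of_nonneg (by positivity)]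
        calc 1/((m:ℝ)+1) * ‖x‖ ≤ 1/((m:ℝ)+1) * 1 := by
              apply mul_le_mul_of_nonneg_left hxl.le (by positivity)
          _ < δ := by rwa [mul_one]
      have h2 := hfd _ hmem2 _ hmem1 hdist
      rw [dist_eq_norm] at h2
      have : ‖f ((((j+1 : ℕ) : ℝ)/(m+1)) • x)‖ ≤ ‖f ((((j : ℕ) : ℝ)/(m+1)) • x)‖ + 1 := by
        calc ‖f ((((j+1 : ℕ) : ℝ)/(m+1)) • x)‖
            ≤ ‖f ((((j : ℕ) : ℝ)/(m+1)) • x)‖ + ‖f ((((j+1 : ℕ) : ℝ)/(m+1)) • x) - f ((((j : ℕ) : ℝ)/(m+1)) • x)‖ := by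
              exact norm_le_insert' _ _
          _ ≤ ‖f ((((j : ℕ) : ℝ)/(m+1)) • x)‖ + 1 := by linarith [h2.le]
      calc ‖f ((((j+1 : ℕ) : ℝ)/(m+1)) • x)‖ ≤ ‖f ((((j : ℕ) : ℝ)/(m+1)) • x)‖ + 1 := this
        _ ≤ ‖f 0‖ + j + 1 := by linarith [ih hj']
        _ = ‖f 0‖ + (j+1 : ℕ) := by push_cast; ring
  have := key (m+1) le_rfl
  have heq : (((m+1 : ℕ) : ℝ)/(m+1)) • x = x := by
    have : ((m+1 : ℕ) : ℝ)/((m:ℝ)+1) = 1 := by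
      push_cast; field_simp
    rw [this, one_smul]
  rw [heq] at this
  calc ‖f x‖ ≤ ‖f 0‖ + ((m+1 : ℕ) : ℝ) := this
    _ = ‖f 0‖ + ((m:ℝ) + 1) := by push_cast; ring

lemma norm_le_supNorm {f : ℓ2 → ℂ} (hb : ∃ C, ∀ x ∈ oB, ‖f x‖ ≤ C) {x : ℓ2}
    (hx : x ∈ oB) : ‖f x‖ ≤ supNorm f := by
  obtain ⟨C, hC⟩ := hb
  exact le_ciSup ⟨C, by rintro _ ⟨i, rfl⟩; exact hC i i.2⟩ (⟨x, hx⟩ : ↥oB)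

lemma supNorm_le {f : ℓ2 → ℂ} {C : ℝ} (h : ∀ x ∈ oB, ‖f x‖ ≤ C) : supNorm f ≤ C :=
  ciSup_le fun x => h x x.2

lemma supNorm_nonneg {f : ℓ2 → ℂ} (hb : ∃ C, ∀ x ∈ oB, ‖f x‖ ≤ C) : 0 ≤ supNorm f :=
  le_trans (norm_nonneg _) (norm_le_supNorm hb zero_mem_oB)

lemma norm_le_supNormV {g : ℓ2 → ℓ2} (hb : ∃ C, ∀ x ∈ oB, ‖g x‖ ≤ C) {x : ℓ2}
    (hx : x ∈ oB) : ‖g x‖ ≤ supNormV g := by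
  obtain ⟨C, hC⟩ := hb
  exact le_ciSup ⟨C, by rintro _ ⟨i, rfl⟩; exact hC i i.2⟩ (⟨x, hx⟩ : ↥oB)

lemma supNormV_le {g : ℓ2 → ℓ2} {C : ℝ} (h : ∀ x ∈ oB, ‖g x‖ ≤ C) : supNormV g ≤ C :=
  ciSup_le fun x => h x x.2

/-! ### The radial sequence -/

/-- the radial scaling factors `n/(n+1)`. -/
def rr (n : ℕ) : ℝ := (n : ℝ) / (n + 1)

lemma rr_nonneg (n : ℕ) : 0 ≤ rr n := by unfold rr; positivity

lemma rr_lt_one (n : ℕ) : rr n < 1 := by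
  rw [rr, div_lt_one (by positivity)]; linarith

lemma tendsto_rr : Tendsto rr atTop (nhds 1) := tendsto_natCast_div_add_atTop (1 : ℝ)

/-- same, as complex numbers -/
def rC (n : ℕ) : ℂ := (rr n : ℝ)

lemma norm_rC (n : ℕ) : ‖rC n‖ = rr n := by
  rw [rC, Complex.norm_real, Real.norm_eq_abs, abs_of_nonneg (rr_nonneg n)]

lemma tendsto_rC : Tendsto rC atTop (nhds 1) := by
  have := (Complex.continuous_ofReal.tendsto 1).comp tendsto_rr
  exact (by simpa using this : Tendsto (Complex.ofReal ∘ rr) atTop (nhds 1))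

lemma rC_smul_mem {y : ℓ2} (hy : y ∈ cB) (n : ℕ) : rC n • y ∈ oB := by
  rw [mem_oB, norm_smul, norm_rC]
  calc rr n * ‖y‖ ≤ rr n * 1 := by
        apply mul_le_mul_of_nonneg_left (mem_cB.1 hy) (rr_nonneg n)
    _ < 1 := by rw [mul_one]; exact rr_lt_one n

/-! ### The radial extension -/

/-- radial boundary value of `f` at `y`. -/
def extval (f : ℓ2 → ℂ) (y : ℓ2) : ℂ := limUnder atTop (fun n => f (rC n • y))

lemma extval_tendsto {f : ℓ2 → ℂ} (hf : MemAu f) {y : ℓ2} (hy : y ∈ cB) :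
    Tendsto (fun n => f (rC n • y)) atTop (nhds (extval f y)) := by
  have hc : CauchySeq (fun n => f (rC n • y)) := by
    rw [Metric.cauchySeq_iff]
    intro ε hε
    obtain ⟨δ, hδ, hfd⟩ := (Metric.uniformContinuousOn_iff.1 hf.2) ε hε
    obtain ⟨N, hN⟩ := Metric.cauchySeq_iff.1 tendsto_rr.cauchySeq δ hδ
    refine ⟨N, fun a ha b hb => ?_⟩
    apply hfd _ (rC_smul_mem hy a) _ (rC_smul_mem hy b)
    rw [dist_eq_norm, ← sub_smul, norm_smul]
    have h1 : ‖rC a - rC b‖ = |rr a - rr b| := by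
      rw [rC, rC, ← Complex.ofReal_sub, Complex.norm_real, Real.norm_eq_abs]
    calc ‖rC a - rC b‖ * ‖y‖ ≤ ‖rC a - rC b‖ * 1 := by
          apply mul_le_mul_of_nonneg_left (mem_cB.1 hy) (norm_nonneg _)
      _ < δ := by
          rw [mul_one, h1, ← Real.dist_eq]
          exact hN a ha b hb
  obtain ⟨L, hL⟩ := cauchySeq_tendsto_of_complete hc
  rwa [extval, hL.limUnder_eq]

lemma extval_of_mem {f : ℓ2 → ℂ} (hf : MemAu f) {y : ℓ2} (hy : y ∈ oB) :
    extval f y = f y := by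
  have h1 : Tendsto (fun n => rC n • y) atTop (nhds y) := by
    have := tendsto_rC.smul_const y
    rwa [one_smul] at this
  have h2 : Tendsto (fun n => rC n • y) atTop (nhdsWithin y oB) := by
    rw [tendsto_nhdsWithin_iff]
    exact ⟨h1, Eventually.of_forall fun n => rC_smul_mem (oB_subset_cB hy) n⟩
  have h3 : Tendsto (fun n => f (rC n • y)) atTop (nhds (f y)) :=
    ((hf.2.continuousOn.continuousWithinAt hy).tendsto).comp h2
  exact h3.limUnder_eq

lemma extval_eq_of_isExt {f fext : ℓ2 → ℂ} (hext : IsExt f fext) {y : ℓ2} (hy : y ∈ cB) :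
    extval f y = fext y := by
  have h1 : Tendsto (fun n => rC n • y) atTop (nhds y) := by
    have := tendsto_rC.smul_const y
    rwa [one_smul] at this
  have h2 : Tendsto (fun n => rC n • y) atTop (nhdsWithin y cB) := by
    rw [tendsto_nhdsWithin_iff]
    exact ⟨h1, Eventually.of_forall fun n => oB_subset_cB (rC_smul_mem hy n)⟩
  have h3 : Tendsto (fun n => fext (rC n • y)) atTop (nhds (fext y)) :=
    ((hext.1.continuousWithinAt hy).tendsto).comp h2
  have h4 : (fun n => fext (rC n • y)) = (fun n => f (rC n • y)) := by
    funext n; exact hext.2 (rC_smul_mem hy n)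
  rw [h4] at h3
  exact h3.limUnder_eq

lemma extval_norm_le {f : ℓ2 → ℂ} (hf : MemAu f) {y : ℓ2} (hy : y ∈ cB) :
    ‖extval f y‖ ≤ supNorm f :=
  le_of_tendsto (extval_tendsto hf hy).norm
    (Eventually.of_forall fun n => norm_le_supNorm hf.bounded (rC_smul_mem hy n))

/-! ### Part 1: the composition homomorphism -/

lemma uc_on_of_uc {α β : Type*} [UniformSpace α] [UniformSpace β] {f : α → β}
    (h : UniformContinuous f) (s : Set α) : UniformContinuousOn f s :=
  uniformContinuousOn_iff_restrict.2 (h.comp uniformContinuous_subtype_val)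

lemma gx_mem_cB {g : ℓ2 → ℓ2} (hg : MemHinfV g) (hle : supNormV g ≤ 1) {x : ℓ2}
    (hx : x ∈ oB) : g x ∈ cB :=
  mem_cB.2 ((norm_le_supNormV hg.2 hx).trans hle)

lemma comp_extval_diff {g : ℓ2 → ℓ2} (hg : MemHinfV g) (hle : supNormV g ≤ 1)
    {f : ℓ2 → ℂ} (hf : MemAu f) :
    DifferentiableOn ℂ (fun x => extval f (g x)) oB := by
  by_cases hall : ∀ x ∈ oB, g x ∈ oB
  · have heq : EqOn (fun x => extval f (g x)) (f ∘ g) oB := fun x hx =>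
      extval_of_mem hf (hall x hx)
    exact (hf.1.comp hg.1 hall).congr heq
  · push_neg at hall
    obtain ⟨x₀, hx₀, hx₀n⟩ := hall
    have hb : ∀ x ∈ oB, ‖g x‖ ≤ 1 := fun x hx => (norm_le_supNormV hg.2 hx).trans hle
    have h1 : ‖g x₀‖ = 1 :=
      le_antisymm (hb x₀ hx₀) (le_of_not_gt fun h => hx₀n (mem_oB.2 h))
    have hmax : IsMaxOn (norm ∘ g) oB x₀ := by
      refine isMaxOn_iff.2 fun x hx => ?_
      show ‖g x‖ ≤ ‖g x₀‖
      rw [h1]; exact hb x hx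
    have hconst : EqOn g (Function.const ℓ2 (g x₀)) oB :=
      Complex.eqOn_of_isPreconnected_of_isMaxOn_norm
        (convex_ball (0:ℓ2) 1).isPreconnected isOpen_ball hg.1 hx₀ hmax
    exact (differentiableOn_const (extval f (g x₀))).congr fun x hx =>
      congrArg (extval f) (hconst hx)

/-- The composition homomorphism `C_g`. -/
def compPhi (g : ℓ2 → ℓ2) (hg : MemHinfV g) (hle : supNormV g ≤ 1) : MuInfHom where
  toFun := fun f x => extval f (g x)
  maps_mem := fun f hf =>
    ⟨comp_extval_diff hg hle hf,
     ⟨supNorm f, fun x hx => extval_norm_le hf (gx_mem_cB hg hle hx)⟩⟩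
  map_add := by
    intro f f' hf hf' x hx
    have hy := gx_mem_cB hg hle hx
    have t := (extval_tendsto hf hy).add (extval_tendsto hf' hy)
    have t' : Tendsto (fun n => (f + f') (rC n • g x)) atTop
        (nhds (extval f (g x) + extval f' (g x))) := by simpa using t
    exact t'.limUnder_eq
  map_mul := by
    intro f f' hf hf' x hx
    have hy := gx_mem_cB hg hle hx
    have t := (extval_tendsto hf hy).mul (extval_tendsto hf' hy)
    have t' : Tendsto (fun n => (f * f') (rC n • g x)) atTop
        (nhds (extval f (g x) * extval f' (g x))) := by simpa using t
    exact t'.limUnder_eq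
  map_smul := by
    intro c f hf x hx
    have hy := gx_mem_cB hg hle hx
    have t := (extval_tendsto hf hy).const_mul c
    have t' : Tendsto (fun n => (c • f) (rC n • g x)) atTop
        (nhds (c * extval f (g x))) := by
      simpa [Pi.smul_apply, smul_eq_mul] using t
    exact t'.limUnder_eq
  respects := by
    intro f f' hf hf' hEq x hx
    have hy := gx_mem_cB hg hle hx
    show extval f (g x) = extval f' (g x)
    have heq : (fun n => f (rC n • g x)) = (fun n => f' (rC n • g x)) :=
      funext fun n => hEq (rC_smul_mem hy n)
    rw [extval, extval, heq]
  nonzero := by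
    refine ⟨(fun _ => 1), ⟨differentiableOn_const _,
      uc_on_of_uc uniformContinuous_const _⟩, 0, zero_mem_oB, ?_⟩
    show extval (fun _ => (1:ℂ)) (g 0) ≠ 0
    have : extval (fun _ => (1:ℂ)) (g 0) = 1 :=
      (tendsto_const_nhds : Tendsto (fun _ : ℕ => (1:ℂ)) atTop (nhds 1)).limUnder_eq
    rw [this]; exact one_ne_zero
  cont := ⟨1, fun f hf x hx => by
    rw [one_mul]; exact extval_norm_le hf (gx_mem_cB hg hle hx)⟩

lemma compPhi_isCompHom (g : ℓ2 → ℓ2) (hg : MemHinfV g) (hle : supNormV g ≤ 1) :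
    IsCompHom (compPhi g hg hle) g := fun _f fext _hf hext x hx =>
  extval_eq_of_isExt hext (gx_mem_cB hg hle hx)

lemma compPhi_xiEq (g : ℓ2 → ℓ2) (hg : MemHinfV g) (hle : supNormV g ≤ 1) :
    xiEq (compPhi g hg hle) g := by
  intro x hx n
  show extval (coord n) (g x) = g x n
  have heq : ∀ m, coord n (rC m • g x) = rC m * g x n := by
    intro m
    show (rC m • g x) n = rC m * g x n
    rw [lp.coeFn_smul, Pi.smul_apply, smul_eq_mul]
  have t : Tendsto (fun m => coord n (rC m • g x)) atTop (nhds (g x n)) := by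
    have := tendsto_rC.mul_const (g x n)
    rw [one_mul] at this
    simpa [heq] using this
  exact t.limUnder_eq

open scoped ENNReal NNReal

/-! ### Scalar one-variable machinery -/

lemma maxmod {G : ℂ → ℂ} {r c : ℝ} (hr : 0 < r)
    (hd : DifferentiableOn ℂ G (closedBall (0:ℂ) r))
    (hb : ∀ z ∈ sphere (0:ℂ) r, ‖G z‖ ≤ c) :
    ∀ z ∈ closedBall (0:ℂ) r, ‖G z‖ ≤ c := by
  intro z hz
  have h1 : DiffContOnCl ℂ G (ball (0:ℂ) r) :=
    DifferentiableOn.diffContOnCl (by rwa [closure_ball (0:ℂ) hr.ne'])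
  refine Complex.norm_le_of_forall_mem_frontier_norm_le isBounded_ball h1 ?_ ?_
  · rwa [frontier_ball (0:ℂ) hr.ne']
  · rwa [closure_ball (0:ℂ) hr.ne']

lemma core {F : ℂ → ℂ} {R M : ℝ} (hR : 0 < R) (hM : 0 ≤ M)
    (hd : DifferentiableOn ℂ F (ball (0:ℂ) R))
    (hb : ∀ z ∈ ball (0:ℂ) R, ‖F z‖ ≤ M) :
    ‖deriv F 0‖ ≤ 4 * M / R ∧
      (4 ≤ R → ‖F 1 - F 0 - deriv F 0‖ ≤ 16 * M / R ^ 2) := by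
  have h0R : (0:ℂ) ∈ ball (0:ℂ) R := mem_ball_self hR
  have hmem : ball (0:ℂ) R ∈ nhds (0:ℂ) := isOpen_ball.mem_nhds h0R
  set q := dslope F 0 with hqdef
  have hq : DifferentiableOn ℂ q (ball (0:ℂ) R) := (Complex.differentiableOn_dslope hmem).2 hd
  have hqb : ∀ r, 0 < r → r < R → ∀ z ∈ closedBall (0:ℂ) r, ‖q z‖ ≤ 2 * M / r := by
    intro r hr hrR
    apply maxmod hr (hq.mono (closedBall_subset_ball hrR))
    intro z hz
    have hzn : ‖z‖ = r := by rwa [mem_sphere_zero_iff_norm] at hz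
    have hz0 : z ≠ 0 := by
      intro h; rw [h] at hzn; simp at hzn; exact absurd hzn.symm hr.ne'
    have hzb : z ∈ ball (0:ℂ) R := by rw [mem_ball_zero_iff, hzn]; exact hrR
    have hnum : ‖F z - F 0‖ ≤ 2 * M := by
      calc ‖F z - F 0‖ ≤ ‖F z‖ + ‖F 0‖ := norm_sub_le _ _
        _ ≤ M + M := add_le_add (hb z hzb) (hb 0 h0R)
        _ = 2 * M := by ring
    rw [hqdef, dslope_of_ne F hz0, slope_def_field]
    calc ‖(F z - F 0) / (z - 0)‖ = ‖F z - F 0‖ / r := by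
          rw [norm_div, sub_zero, hzn]
      _ ≤ 2 * M / r := by gcongr
  have hq0 : deriv F 0 = q 0 := (dslope_same F 0).symm
  have hR2 : 0 < R / 2 := by linarith
  have hq2 := hqb (R/2) hR2 (by linarith)
  constructor
  · have h := hq2 0 (mem_closedBall_self hR2.le)
    rw [hq0]
    calc ‖q 0‖ ≤ 2 * M / (R/2) := h
      _ = 4 * M / R := by field_simp; ring
  · intro hR4
    set p := dslope q 0 with hpdef
    have hp : DifferentiableOn ℂ p (ball (0:ℂ) R) := (Complex.differentiableOn_dslope hmem).2 hq
    have hpb : ∀ z ∈ closedBall (0:ℂ) (R/2), ‖p z‖ ≤ 16 * M / R ^ 2 := by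
      apply maxmod hR2 (hp.mono (closedBall_subset_ball (by linarith)))
      intro z hz
      have hzn : ‖z‖ = R/2 := by rwa [mem_sphere_zero_iff_norm] at hz
      have hz0 : z ≠ 0 := by
        intro h; rw [h] at hzn; simp at hzn; exact absurd hzn.symm hR2.ne'
      have hzc : z ∈ closedBall (0:ℂ) (R/2) := by
        rw [mem_closedBall_zero_iff, hzn]
      have h1 : ‖q z - q 0‖ ≤ 2 * M / (R/2) + 2 * M / (R/2) := by
        calc ‖q z - q 0‖ ≤ ‖q z‖ + ‖q 0‖ := norm_sub_le _ _
          _ ≤ 2 * M / (R/2) + 2 * M / (R/2) :=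
              add_le_add (hq2 z hzc) (hq2 0 (mem_closedBall_self hR2.le))
      rw [hpdef, dslope_of_ne q hz0, slope_def_field]
      calc ‖(q z - q 0) / (z - 0)‖ = ‖q z - q 0‖ / (R/2) := by
            rw [norm_div, sub_zero, hzn]
        _ ≤ (2 * M / (R/2) + 2 * M / (R/2)) / (R/2) := by gcongr
        _ = 16 * M / R ^ 2 := by field_simp; ring
    have h1c : (1:ℂ) ∈ closedBall (0:ℂ) (R/2) := by
      rw [mem_closedBall_zero_iff]
      simp only [norm_one]
      linarith
    have hfin := hpb 1 h1c
    have hp1 : p 1 = q 1 - q 0 := by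
      rw [hpdef, dslope_of_ne q one_ne_zero, slope_def_field]; simp
    have hq1 : q 1 = F 1 - F 0 := by
      rw [hqdef, dslope_of_ne F one_ne_zero, slope_def_field]; simp
    rw [hq0]
    rw [hp1, hq1] at hfin
    exact hfin

/-! ### Cauchy-Schwarz and square-sum lemmas -/

lemma cs_pair (s : Finset ℕ) (b w : ℕ → ℂ) (h : ∑ n ∈ s, ‖w n‖^2 ≤ 1) :
    ‖∑ n ∈ s, b n * w n‖ ≤ Real.sqrt (∑ n ∈ s, ‖b n‖^2) := by
  calc ‖∑ n ∈ s, b n * w n‖ ≤ ∑ n ∈ s, ‖b n * w n‖ := norm_sum_le _ _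
    _ = ∑ n ∈ s, ‖b n‖ * ‖w n‖ := by simp [norm_mul]
    _ ≤ Real.sqrt (∑ n ∈ s, ‖b n‖^2) * Real.sqrt (∑ n ∈ s, ‖w n‖^2) :=
        Real.sum_mul_le_sqrt_mul_sqrt _ _ _
    _ ≤ Real.sqrt (∑ n ∈ s, ‖b n‖^2) * 1 := by
        apply mul_le_mul_of_nonneg_left _ (Real.sqrt_nonneg _)
        rw [show (1:ℝ) = Real.sqrt 1 by rw [Real.sqrt_one]]
        exact Real.sqrt_le_sqrt h
    _ = _ := mul_one _

lemma root_le {t A C : ℝ} (ht : 0 ≤ t) (hA : 0 ≤ A) (hC : 0 ≤ C)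
    (h : ∀ k : ℕ, 1 ≤ k → t^k ≤ C * A^k) : t ≤ A := by
  by_contra hlt
  push_neg at hlt
  have ht0 : 0 < t := lt_of_le_of_lt hA hlt
  rcases eq_or_lt_of_le hA with hA0 | hA0
  · have h1 := h 1 le_rfl
    rw [pow_one, pow_one, ← hA0, mul_zero] at h1
    linarith
  · have hone : 1 < t / A := (one_lt_div hA0).2 hlt
    obtain ⟨N, hN⟩ := Filter.eventually_atTop.1
      ((tendsto_pow_atTop_atTop_of_one_lt hone).eventually_gt_atTop C)
    have h2 := h (N+1) (by omega)
    have hAk : (0:ℝ) < A^(N+1) := pow_pos hA0 _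
    have h3 : (t/A)^(N+1) ≤ C := by
      rw [div_pow, div_le_iff₀ hAk]; linarith
    exact absurd h3 (not_le.2 (hN (N+1) (Nat.le_succ N)))

lemma sq_sum_le_of_pairing {w : ℕ → ℂ} {c : ℝ} (hc : 0 ≤ c) (s : Finset ℕ)
    (h : ∀ b : ℕ → ℂ, ‖∑ n ∈ s, b n * w n‖ ≤ Real.sqrt (∑ n ∈ s, ‖b n‖^2) * c) :
    ∑ n ∈ s, ‖w n‖^2 ≤ c^2 := by
  set S := ∑ n ∈ s, ‖w n‖^2 with hS
  have hS0 : 0 ≤ S := Finset.sum_nonneg fun n _ => sq_nonneg _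
  have hb := h (fun n => (starRingEnd ℂ) (w n))
  have h1 : ∑ n ∈ s, (starRingEnd ℂ) (w n) * w n = ((S : ℝ) : ℂ) := by
    rw [hS]
    push_cast
    apply Finset.sum_congr rfl
    intro n _
    exact RCLike.conj_mul (w n)
  have h2 : ‖∑ n ∈ s, (starRingEnd ℂ) (w n) * w n‖ = S := by
    rw [h1, Complex.norm_real, Real.norm_eq_abs, abs_of_nonneg hS0]
  have h3 : ∑ n ∈ s, ‖(starRingEnd ℂ) (w n)‖^2 = S := by
    rw [hS]
    apply Finset.sum_congr rfl
    intro n _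
    rw [RCLike.norm_conj]
  rw [h2, h3] at hb
  have hu := Real.sq_sqrt hS0
  have hu0 := Real.sqrt_nonneg S
  nlinarith [sq_nonneg (Real.sqrt S - c)]

/-! ### lp norm helpers -/

lemma memℓp_two_of_sum_sq_le {w : ℕ → ℂ} {c : ℝ}
    (h : ∀ N : ℕ, ∑ n ∈ Finset.range N, ‖w n‖^2 ≤ c) : Memℓp w 2 := by
  apply memℓp_gen
  have h2 : ((2:ℝ≥0∞)).toReal = ((2:ℕ):ℝ) := by simp
  rw [h2]
  simp_rw [Real.rpow_natCast]
  exact summable_of_sum_range_le (fun n => sq_nonneg _) h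

lemma lp_norm_le_of_sum_sq_le {f : ℓ2} {c : ℝ} (hc : 0 ≤ c)
    (h : ∀ N : ℕ, ∑ n ∈ Finset.range N, ‖f n‖^2 ≤ c) : ‖f‖ ≤ Real.sqrt c := by
  have hp : (0:ℝ) < (2:ℝ≥0∞).toReal := by norm_num
  have hconv : ∀ x : ℝ, x ^ (2:ℝ≥0∞).toReal = x^(2:ℕ) := fun x => by
    rw [show (2:ℝ≥0∞).toReal = ((2:ℕ):ℝ) by simp, Real.rpow_natCast]
  have h1 := lp.norm_rpow_eq_tsum hp f
  have hsum := (lp.memℓp f).summable hp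
  have h2 : ∑' n, ‖f n‖ ^ (2:ℝ≥0∞).toReal ≤ c := by
    apply Summable.tsum_le_of_sum_range_le hsum
    intro N
    calc ∑ n ∈ Finset.range N, ‖f n‖ ^ (2:ℝ≥0∞).toReal
        = ∑ n ∈ Finset.range N, ‖f n‖^(2:ℕ) := by
          apply Finset.sum_congr rfl; intro n _; rw [hconv]
      _ ≤ c := h N
  have h3 : ‖f‖^(2:ℕ) ≤ c := by
    rw [← hconv ‖f‖, h1]; exact h2
  exact (Real.le_sqrt (norm_nonneg f) hc).2 h3

/-! ### Coordinates as continuous linear maps, finite combinations -/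

/-- The coordinate functional as a continuous linear map. -/
def coordL (n : ℕ) : ℓ2 →L[ℂ] ℂ :=
  LinearMap.mkContinuous
    { toFun := fun x => x n
      map_add' := fun x y => by simp
      map_smul' := fun c x => by simp }
    1 (fun x => by
        rw [one_mul]
        exact lp.norm_apply_le_norm (by norm_num : (2:ℝ≥0∞) ≠ 0) x n)

lemma coordL_apply (n : ℕ) (x : ℓ2) : coordL n x = x n := rfl

lemma memAu_CLM (T : ℓ2 →L[ℂ] ℂ) : MemAu (fun x => T x) :=
  ⟨T.differentiable.differentiableOn, uc_on_of_uc T.uniformContinuous _⟩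

lemma memAu_coord (n : ℕ) : MemAu (coord n) := memAu_CLM (coordL n)

lemma memAu_smul_coord (c : ℂ) (n : ℕ) : MemAu (c • coord n) := memAu_CLM (c • coordL n)

lemma memAu_zero : MemAu (0 : ℓ2 → ℂ) :=
  ⟨differentiableOn_const 0, uc_on_of_uc uniformContinuous_const _⟩

/-- finite linear combination of coordinates. -/
def fc (s : Finset ℕ) (a : ℕ → ℂ) : ℓ2 → ℂ := fun x => ∑ n ∈ s, a n * x n

lemma fc_apply (s : Finset ℕ) (a : ℕ → ℂ) (x : ℓ2) : fc s a x = ∑ n ∈ s, a n * x n := rfl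

lemma memAu_fc (s : Finset ℕ) (a : ℕ → ℂ) : MemAu (fc s a) := by
  have h := memAu_CLM (∑ n ∈ s, a n • coordL n)
  have he : fc s a = fun x => (∑ n ∈ s, a n • coordL n) x := by
    funext x
    rw [fc_apply, ContinuousLinearMap.sum_apply]
    apply Finset.sum_congr rfl
    intro n _
    rw [ContinuousLinearMap.smul_apply, coordL_apply, smul_eq_mul]
  rw [he]; exact h

lemma sum_sq_coords_le (x : ℓ2) (s : Finset ℕ) : ∑ n ∈ s, ‖x n‖^2 ≤ ‖x‖^2 := by
  have hp : (0:ℝ) < (2:ℝ≥0∞).toReal := by norm_num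
  have h := lp.sum_rpow_le_norm_rpow hp x s
  have hconv : ∀ y : ℝ, y ^ (2:ℝ≥0∞).toReal = y^(2:ℕ) := fun y => by
    rw [show (2:ℝ≥0∞).toReal = ((2:ℕ):ℝ) by simp, Real.rpow_natCast]
  calc ∑ n ∈ s, ‖x n‖^2 = ∑ n ∈ s, ‖x n‖ ^ (2:ℝ≥0∞).toReal := by
        apply Finset.sum_congr rfl; intro n _; rw [hconv]
    _ ≤ ‖x‖ ^ (2:ℝ≥0∞).toReal := h
    _ = ‖x‖^2 := by rw [hconv]

lemma fc_bound (s : Finset ℕ) (a : ℕ → ℂ) {x : ℓ2} (hx : ‖x‖ ≤ 1) :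
    ‖fc s a x‖ ≤ Real.sqrt (∑ n ∈ s, ‖a n‖^2) := by
  rw [fc_apply]
  apply cs_pair
  calc ∑ n ∈ s, ‖x n‖^2 ≤ ‖x‖^2 := sum_sq_coords_le x s
    _ ≤ 1 := by nlinarith [norm_nonneg x]

/-! ### MemAu is closed under products -/

lemma MemAu.mul' {f g : ℓ2 → ℂ} (hf : MemAu f) (hg : MemAu g) : MemAu (f * g) := by
  refine ⟨hf.1.mul hg.1, ?_⟩
  obtain ⟨Cf, hCf⟩ := hf.bounded
  obtain ⟨Cg, hCg⟩ := hg.bounded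
  have hCf0 : 0 ≤ Cf := (norm_nonneg _).trans (hCf 0 zero_mem_oB)
  have hCg0 : 0 ≤ Cg := (norm_nonneg _).trans (hCg 0 zero_mem_oB)
  rw [Metric.uniformContinuousOn_iff]
  intro ε hε
  have he1 : 0 < ε / (2*(Cf+1)) := by positivity
  have he2 : 0 < ε / (2*(Cg+1)) := by positivity
  obtain ⟨δf, hδf, hfd⟩ := (Metric.uniformContinuousOn_iff.1 hf.2) (ε / (2*(Cg+1))) he2
  obtain ⟨δg, hδg, hgd⟩ := (Metric.uniformContinuousOn_iff.1 hg.2) (ε / (2*(Cf+1))) he1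
  refine ⟨min δf δg, lt_min hδf hδg, fun x hx y hy hxy => ?_⟩
  have h1 := hfd x hx y hy (lt_of_lt_of_le hxy (min_le_left _ _))
  have h2 := hgd x hx y hy (lt_of_lt_of_le hxy (min_le_right _ _))
  rw [dist_eq_norm] at h1 h2 ⊢
  have key : (f*g) x - (f*g) y = f x * (g x - g y) + g y * (f x - f y) := by
    simp only [Pi.mul_apply]; ring
  rw [key]
  have hb1 : ‖f x * (g x - g y)‖ ≤ Cf * (ε / (2*(Cf+1))) := by
    rw [norm_mul]
    exact mul_le_mul (hCf x hx) h2.le (norm_nonneg _) hCf0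
  have hb2 : ‖g y * (f x - f y)‖ ≤ Cg * (ε / (2*(Cg+1))) := by
    rw [norm_mul]
    exact mul_le_mul (hCg y hy) h1.le (norm_nonneg _) hCg0
  have hb3 : Cf * (ε / (2*(Cf+1))) < ε/2 := by
    have hlt : Cf * (ε / (2*(Cf+1))) < (Cf+1) * (ε / (2*(Cf+1))) :=
      mul_lt_mul_of_pos_right (lt_add_one Cf) he1
    have heq : (Cf+1) * (ε / (2*(Cf+1))) = ε/2 := by
      field_simp
    linarith
  have hb4 : Cg * (ε / (2*(Cg+1))) < ε/2 := by
    have hlt : Cg * (ε / (2*(Cg+1))) < (Cg+1) * (ε / (2*(Cg+1))) :=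
      mul_lt_mul_of_pos_right (lt_add_one Cg) he2
    have heq : (Cg+1) * (ε / (2*(Cg+1))) = ε/2 := by
      field_simp
    linarith
  calc ‖f x * (g x - g y) + g y * (f x - f y)‖
      ≤ ‖f x * (g x - g y)‖ + ‖g y * (f x - f y)‖ := norm_add_le _ _
    _ < ε := by linarith

lemma memAu_pow {f : ℓ2 → ℂ} (hf : MemAu f) : ∀ k, 1 ≤ k → MemAu (f^k) := by
  intro k hk
  induction k with
  | zero => omega
  | succ j ih =>
    rcases Nat.eq_zero_or_pos j with h0 | hpos
    · subst h0; rw [pow_one]; exact hf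
    · rw [pow_succ]; exact (ih hpos).mul' hf

/-! ### Consequences of the homomorphism axioms -/

lemma phi_zero (Φ : MuInfHom) {x : ℓ2} (hx : x ∈ oB) : Φ.toFun 0 x = 0 := by
  have h := Φ.map_add 0 0 memAu_zero memAu_zero x hx
  rw [add_zero (0 : ℓ2 → ℂ)] at h
  linear_combination -h

lemma phi_fc (Φ : MuInfHom) {x : ℓ2} (hx : x ∈ oB) (a : ℕ → ℂ) (s : Finset ℕ) :
    Φ.toFun (fc s a) x = ∑ n ∈ s, a n * Φ.toFun (coord n) x := by
  induction s using Finset.induction_on with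
  | empty =>
    have hz : fc ∅ a = (0 : ℓ2 → ℂ) := funext fun y => Finset.sum_empty
    rw [hz, Finset.sum_empty]
    exact phi_zero Φ hx
  | @insert m s hm ih =>
    have hsplit : fc (insert m s) a = (a m • coord m) + fc s a := by
      funext y
      simp [fc_apply, Finset.sum_insert hm, coord, Pi.add_apply, Pi.smul_apply, smul_eq_mul]
    rw [hsplit, Φ.map_add _ _ (memAu_smul_coord _ _) (memAu_fc _ _) x hx,
        Φ.map_smul (a m) (coord m) (memAu_coord m) x hx, ih, Finset.sum_insert hm]

lemma phi_pow (Φ : MuInfHom) {f : ℓ2 → ℂ} (hf : MemAu f) {x : ℓ2} (hx : x ∈ oB) :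
    ∀ k, 1 ≤ k → Φ.toFun (f^k) x = (Φ.toFun f x)^k := by
  intro k hk
  induction k with
  | zero => omega
  | succ j ih =>
    rcases Nat.eq_zero_or_pos j with h0 | hpos
    · subst h0; rw [pow_one, pow_one]
    · rw [pow_succ, pow_succ, Φ.map_mul _ _ (memAu_pow hf j hpos) hf x hx, ih hpos]

lemma supNorm_fc_pow (s : Finset ℕ) (a : ℕ → ℂ) (k : ℕ) :
    supNorm ((fc s a)^k) ≤ (Real.sqrt (∑ n ∈ s, ‖a n‖^2))^k := by
  apply supNorm_le
  intro x hx
  have h : ((fc s a)^k) x = (fc s a x)^k := by simp [Pi.pow_apply]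
  rw [h, norm_pow]
  exact pow_le_pow_left₀ (norm_nonneg _) (fc_bound s a (le_of_lt (mem_oB.1 hx))) k

/-- The key square-sum bound for the coordinates of the vector-valued spectrum. -/
lemma phi_sq_sum_le (Φ : MuInfHom) {x : ℓ2} (hx : x ∈ oB) (s : Finset ℕ) :
    ∑ n ∈ s, ‖Φ.toFun (coord n) x‖^2 ≤ 1 := by
  obtain ⟨C, hC⟩ := Φ.cont
  set C' := max C 0 with hC'
  have hC'0 : 0 ≤ C' := le_max_right _ _
  set a := fun n => (starRingEnd ℂ) (Φ.toFun (coord n) x) with ha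
  set A := Real.sqrt (∑ n ∈ s, ‖a n‖^2) with hA
  have hroot : ‖Φ.toFun (fc s a) x‖ ≤ A := by
    apply root_le (norm_nonneg _) (Real.sqrt_nonneg _) hC'0
    intro k hk
    have hmem := memAu_pow (memAu_fc s a) k hk
    have h1 : ‖Φ.toFun (fc s a) x‖^k = ‖Φ.toFun ((fc s a)^k) x‖ := by
      rw [phi_pow Φ (memAu_fc s a) hx k hk, norm_pow]
    rw [h1]
    calc ‖Φ.toFun ((fc s a)^k) x‖ ≤ C * supNorm ((fc s a)^k) := hC _ hmem x hx
      _ ≤ C' * supNorm ((fc s a)^k) :=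
          mul_le_mul_of_nonneg_right (le_max_left _ _) (supNorm_nonneg hmem.bounded)
      _ ≤ C' * A^k := mul_le_mul_of_nonneg_left (supNorm_fc_pow s a k) hC'0
  set S := ∑ n ∈ s, ‖Φ.toFun (coord n) x‖^2 with hS
  have hS0 : 0 ≤ S := Finset.sum_nonneg fun n _ => sq_nonneg _
  have heval : Φ.toFun (fc s a) x = ((S:ℝ):ℂ) := by
    rw [phi_fc Φ hx a s, hS]
    push_cast
    apply Finset.sum_congr rfl
    intro n _
    exact RCLike.conj_mul _
  have hnorm : ‖Φ.toFun (fc s a) x‖ = S := by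
    rw [heval, Complex.norm_real, Real.norm_eq_abs, abs_of_nonneg hS0]
  have hAS : A = Real.sqrt S := by
    rw [hA, hS]
    congr 1
    apply Finset.sum_congr rfl
    intro n _
    rw [ha, RCLike.norm_conj]
  rw [hnorm, hAS] at hroot
  nlinarith [Real.sq_sqrt hS0, Real.sqrt_nonneg S, sq_nonneg (Real.sqrt S - 1)]

/-! ### The vector-valued projection of `Φ` -/

open Classical in
/-- The coordinates of `ξ(Φ)`. -/
def phiG (Φ : MuInfHom) : ℓ2 → ℕ → ℂ := fun x n =>
  if x ∈ oB then Φ.toFun (coord n) x else 0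

lemma phiG_sum_sq (Φ : MuInfHom) (x : ℓ2) (N : ℕ) :
    ∑ n ∈ Finset.range N, ‖phiG Φ x n‖^2 ≤ 1 := by
  by_cases hx : x ∈ oB
  · simp only [phiG, if_pos hx]
    exact phi_sq_sum_le Φ hx (Finset.range N)
  · simp [phiG, if_neg hx]

lemma phiG_memℓp (Φ : MuInfHom) (x : ℓ2) : Memℓp (phiG Φ x) 2 :=
  memℓp_two_of_sum_sq_le (phiG_sum_sq Φ x)

/-- The function `ξ(Φ)`. -/
def phig (Φ : MuInfHom) : ℓ2 → ℓ2 := fun x => ⟨phiG Φ x, phiG_memℓp Φ x⟩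

lemma phig_coe (Φ : MuInfHom) (x : ℓ2) (n : ℕ) : phig Φ x n = phiG Φ x n := rfl

lemma phig_eval (Φ : MuInfHom) {x : ℓ2} (hx : x ∈ oB) (n : ℕ) :
    phig Φ x n = Φ.toFun (coord n) x := by
  rw [phig_coe, phiG, if_pos hx]

lemma phig_norm_le (Φ : MuInfHom) (x : ℓ2) : ‖phig Φ x‖ ≤ 1 := by
  have h := lp_norm_le_of_sum_sq_le (f := phig Φ x) zero_le_one (fun N => phiG_sum_sq Φ x N)
  rwa [Real.sqrt_one] at h

/-- Holomorphy of `ξ(Φ)`. -/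
lemma phig_diff (Φ : MuInfHom) : DifferentiableOn ℂ (phig Φ) oB := by
  intro x₀ hx₀
  suffices hD : DifferentiableAt ℂ (phig Φ) x₀ from hD.differentiableWithinAt
  set ρ := 1 - ‖x₀‖ with hρ
  have hρ0 : 0 < ρ := by have := mem_oB.1 hx₀; rw [hρ]; linarith
  set h := fun n => Φ.toFun (coord n) with hh
  have hdiff : ∀ n, DifferentiableOn ℂ (h n) oB := fun n => (Φ.maps_mem _ (memAu_coord n)).1
  have hdAt : ∀ n, DifferentiableAt ℂ (h n) x₀ := fun n =>
    ((hdiff n) x₀ hx₀).differentiableAt (oB_open.mem_nhds hx₀)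
  set D := fun n => fderiv ℂ (h n) x₀ with hDdef
  -- the auxiliary one-variable functions
  have hpsi : ∀ (b : ℕ → ℂ) (s : Finset ℕ) (v : ℓ2), v ≠ 0 →
      (DifferentiableOn ℂ (fun z : ℂ => ∑ n ∈ s, b n * h n (x₀ + z • v)) (ball 0 (ρ/‖v‖)) ∧
       (∀ z ∈ ball (0:ℂ) (ρ/‖v‖), ‖∑ n ∈ s, b n * h n (x₀ + z • v)‖ ≤
          Real.sqrt (∑ n ∈ s, ‖b n‖^2)) ∧
       HasDerivAt (fun z : ℂ => ∑ n ∈ s, b n * h n (x₀ + z • v)) (∑ n ∈ s, b n * D n v) 0) := by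
    intro b s v hv
    have hvn : 0 < ‖v‖ := norm_pos_iff.2 hv
    have hmemline : ∀ z ∈ ball (0:ℂ) (ρ/‖v‖), x₀ + z • v ∈ oB := by
      intro z hz
      rw [mem_ball_zero_iff] at hz
      rw [mem_oB]
      have h2 : ‖z‖ * ‖v‖ < ρ := (lt_div_iff₀ hvn).1 hz
      calc ‖x₀ + z • v‖ ≤ ‖x₀‖ + ‖z • v‖ := norm_add_le _ _
        _ = ‖x₀‖ + ‖z‖ * ‖v‖ := by rw [norm_smul]
        _ < ‖x₀‖ + ρ := by linarith
        _ = 1 := by rw [hρ]; ring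
    have haffd : Differentiable ℂ (fun z : ℂ => x₀ + z • v) :=
      (differentiable_id.smul_const v).const_add x₀
    refine ⟨?_, ?_, ?_⟩
    · apply DifferentiableOn.fun_sum
      intro n _
      have hcomp := DifferentiableOn.comp (hdiff n) haffd.differentiableOn hmemline
      have hcomp' : DifferentiableOn ℂ (fun z : ℂ => h n (x₀ + z • v)) (ball 0 (ρ/‖v‖)) := by
        simpa [Function.comp_def] using hcomp
      exact (differentiableOn_const (b n)).mul hcomp'
    · intro z hz
      exact cs_pair s b _ (phi_sq_sum_le Φ (hmemline z hz) s)
    · apply HasDerivAt.fun_sum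
      intro n _
      have hline0 : HasDerivAt (fun z : ℂ => x₀ + z • v) v 0 := by
        have h1 : HasDerivAt (fun z : ℂ => z • v) ((1:ℂ) • v) 0 := (hasDerivAt_id 0).smul_const v
        simpa using h1.const_add x₀
      have hF' : HasFDerivAt (h n) (D n) (x₀ + (0:ℂ) • v) := by
        simpa using (hdAt n).hasFDerivAt
      exact (hF'.comp_hasDerivAt 0 hline0).const_mul (b n)
  -- first estimate: the candidate derivative is ℓ²-bounded
  have E1 : ∀ (v : ℓ2) (N : ℕ), ∑ n ∈ Finset.range N, ‖D n v‖^2 ≤ (4*‖v‖/ρ)^2 := by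
    intro v N
    rcases eq_or_ne v 0 with rfl | hv
    · have hz : ∀ n ∈ Finset.range N, ‖D n (0:ℓ2)‖^2 = 0 := by
        intro n _; rw [map_zero, norm_zero]; ring
      rw [Finset.sum_congr rfl hz, Finset.sum_const, smul_zero]
      positivity
    · have hvn : 0 < ‖v‖ := norm_pos_iff.2 hv
      have hR0 : 0 < ρ/‖v‖ := by positivity
      apply sq_sum_le_of_pairing (by positivity) (Finset.range N)
      intro b
      obtain ⟨hd, hb, hder⟩ := hpsi b (Finset.range N) v hv
      have hcore := (core hR0 (Real.sqrt_nonneg _) hd hb).1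
      rw [hder.deriv] at hcore
      calc ‖∑ n ∈ Finset.range N, b n * D n v‖
          ≤ 4 * Real.sqrt (∑ n ∈ Finset.range N, ‖b n‖^2) / (ρ/‖v‖) := hcore
        _ = Real.sqrt (∑ n ∈ Finset.range N, ‖b n‖^2) * (4*‖v‖/ρ) := by
            field_simp
            try ring
  -- second estimate: quadratic remainder bound
  have E2 : ∀ (v : ℓ2), v ≠ 0 → ‖v‖ ≤ ρ/4 → ∀ N : ℕ,
      ∑ n ∈ Finset.range N, ‖h n (x₀+v) - h n x₀ - D n v‖^2 ≤ (16*‖v‖^2/ρ^2)^2 := by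
    intro v hv hvle N
    have hvn : 0 < ‖v‖ := norm_pos_iff.2 hv
    have hR0 : 0 < ρ/‖v‖ := by positivity
    have hR4 : 4 ≤ ρ/‖v‖ := by
      rw [le_div_iff₀ hvn]; linarith
    apply sq_sum_le_of_pairing (by positivity) (Finset.range N)
    intro b
    obtain ⟨hd, hb, hder⟩ := hpsi b (Finset.range N) v hv
    have hcore := (core hR0 (Real.sqrt_nonneg _) hd hb).2 hR4
    rw [hder.deriv] at hcore
    have key : (∑ n ∈ Finset.range N, b n * h n (x₀ + (1:ℂ) • v))
        - (∑ n ∈ Finset.range N, b n * h n (x₀ + (0:ℂ) • v))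
        - (∑ n ∈ Finset.range N, b n * D n v)
        = ∑ n ∈ Finset.range N, b n * (h n (x₀+v) - h n x₀ - D n v) := by
      simp only [one_smul, zero_smul, add_zero]
      rw [← Finset.sum_sub_distrib, ← Finset.sum_sub_distrib]
      apply Finset.sum_congr rfl
      intro n _
      ring
    rw [key] at hcore
    calc ‖∑ n ∈ Finset.range N, b n * (h n (x₀+v) - h n x₀ - D n v)‖
        ≤ 16 * Real.sqrt (∑ n ∈ Finset.range N, ‖b n‖^2) / (ρ/‖v‖)^2 := hcore
      _ = Real.sqrt (∑ n ∈ Finset.range N, ‖b n‖^2) * (16*‖v‖^2/ρ^2) := by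
          field_simp
          try ring
  -- the candidate derivative as a continuous linear map
  have hDmem : ∀ v : ℓ2, Memℓp (fun n => D n v) 2 := fun v =>
    memℓp_two_of_sum_sq_le (fun N => E1 v N)
  set Dmap : ℓ2 →ₗ[ℂ] ℓ2 :=
    { toFun := fun v => (⟨fun n => D n v, hDmem v⟩ : ℓ2)
      map_add' := fun v w => by
        apply lp.ext
        funext n
        show D n (v + w) = ((⟨fun n => D n v, hDmem v⟩ : ℓ2) + ⟨fun n => D n w, hDmem w⟩ : ℓ2) n
        rw [lp.coeFn_add, Pi.add_apply]
        exact (D n).map_add v w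
      map_smul' := fun c v => by
        apply lp.ext
        funext n
        show D n (c • v) = (c • (⟨fun n => D n v, hDmem v⟩ : ℓ2) : ℓ2) n
        rw [lp.coeFn_smul, Pi.smul_apply]
        rw [(D n).map_smul c v]
        try rfl } with hDmap
  have hDbound : ∀ v : ℓ2, ‖Dmap v‖ ≤ (4/ρ) * ‖v‖ := by
    intro v
    have h1 : ∀ N, ∑ n ∈ Finset.range N, ‖(Dmap v) n‖^2 ≤ (4*‖v‖/ρ)^2 := fun N => E1 v N
    have h2 := lp_norm_le_of_sum_sq_le (by positivity) h1
    calc ‖Dmap v‖ ≤ Real.sqrt ((4*‖v‖/ρ)^2) := h2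
      _ = 4*‖v‖/ρ := Real.sqrt_sq (by positivity)
      _ = (4/ρ)*‖v‖ := by ring
  set DL : ℓ2 →L[ℂ] ℓ2 := LinearMap.mkContinuous Dmap (4/ρ) hDbound with hDL
  have hmain : HasFDerivAt (phig Φ) DL x₀ := by
    rw [hasFDerivAt_iff_isLittleO_nhds_zero, Asymptotics.isLittleO_iff]
    intro c hc
    have hη : 0 < min (ρ/4) (c*ρ^2/16) := by positivity
    filter_upwards [Metric.ball_mem_nhds (0:ℓ2) hη] with v hv
    rw [mem_ball_zero_iff] at hv
    rcases eq_or_ne v 0 with rfl | hv0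
    · simp
    · have hv4 : ‖v‖ ≤ ρ/4 := le_of_lt (lt_of_lt_of_le hv (min_le_left _ _))
      have hvc : ‖v‖ ≤ c*ρ^2/16 := le_of_lt (lt_of_lt_of_le hv (min_le_right _ _))
      have hvn : 0 < ‖v‖ := norm_pos_iff.2 hv0
      have hx0v : x₀ + v ∈ oB := by
        rw [mem_oB]
        calc ‖x₀ + v‖ ≤ ‖x₀‖ + ‖v‖ := norm_add_le _ _
          _ ≤ ‖x₀‖ + ρ/4 := by linarith
          _ < 1 := by rw [hρ] at *; linarith
      have hcoord : ∀ n, (phig Φ (x₀+v) - phig Φ x₀ - DL v) n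
          = h n (x₀+v) - h n x₀ - D n v := by
        intro n
        rw [lp.coeFn_sub, Pi.sub_apply, lp.coeFn_sub, Pi.sub_apply,
          phig_eval Φ hx0v n, phig_eval Φ hx₀ n]
        rfl
      have hsum : ∀ N, ∑ n ∈ Finset.range N, ‖(phig Φ (x₀+v) - phig Φ x₀ - DL v) n‖^2
          ≤ (16*‖v‖^2/ρ^2)^2 := by
        intro N
        calc ∑ n ∈ Finset.range N, ‖(phig Φ (x₀+v) - phig Φ x₀ - DL v) n‖^2
            = ∑ n ∈ Finset.range N, ‖h n (x₀+v) - h n x₀ - D n v‖^2 := by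
              apply Finset.sum_congr rfl; intro n _; rw [hcoord]
          _ ≤ (16*‖v‖^2/ρ^2)^2 := E2 v hv0 hv4 N
      have hnorm := lp_norm_le_of_sum_sq_le (by positivity) hsum
      rw [Real.sqrt_sq (by positivity)] at hnorm
      calc ‖phig Φ (x₀+v) - phig Φ x₀ - DL v‖ ≤ 16*‖v‖^2/ρ^2 := hnorm
        _ = (16*‖v‖/ρ^2) * ‖v‖ := by ring
        _ ≤ c * ‖v‖ := by
            apply mul_le_mul_of_nonneg_right _ (norm_nonneg _)
            have h16 : 16 * ‖v‖ ≤ c * ρ^2 := by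
              have h17 := mul_le_mul_of_nonneg_left hvc (by norm_num : (0:ℝ) ≤ 16)
              calc 16 * ‖v‖ ≤ 16 * (c*ρ^2/16) := h17
                _ = c * ρ^2 := by ring
            rw [div_le_iff₀ (by positivity)]
            exact h16
  exact hmain.differentiableAt

/-- for every `g` in the closed unit ball of `ℋ^∞(B,ℓ2)`, the composition
operator `C_g : f ↦ f̃ ∘ g` belongs to `ℳ_{u,∞}(B,B)` and `ξ(C_g) = g`; consequently the
image of `ξ` is exactly the closed unit ball of `ℋ^∞(B,ℓ2)`. -/
theorem stmt19 :
    -- C_g ∈ ℳ_{u,∞}(B,B) and ξ(C_g) = g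
    (∀ g, MemHinfV g → supNormV g ≤ 1 →
      ∃ Φ : MuInfHom, IsCompHom Φ g ∧ xiEq Φ g) ∧
    -- every ξ(Φ) lies in the closed unit ball of ℋ^∞(B,ℓ2)
    (∀ Φ : MuInfHom, ∃ g : ℓ2 → ℓ2, MemHinfV g ∧ supNormV g ≤ 1 ∧ xiEq Φ g) := by
  constructor
  · intro g hg hle
    exact ⟨compPhi g hg hle, compPhi_isCompHom g hg hle, compPhi_xiEq g hg hle⟩
  · intro Φ
    refine ⟨phig Φ, ⟨phig_diff Φ, 1, fun x _ => phig_norm_le Φ x⟩,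
      supNormV_le (fun x _ => phig_norm_le Φ x), ?_⟩
    intro x hx n
    exact (phig_eval Φ hx n).symm
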